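/- For every n ≥ 2, the semigroup NM of nearly monotonic transformations of Fin n is a maximal aperiodic subsemigroup in the following sense: if T is a set of transformations of Fin n that is closed under composition, every element of T is aperiodic, and NM ⊆ T, then T = NM. -/
import Mathlib


/-- A transformation of `Fin n` is aperiodic if it contains no cycles of length
greater than 1: for every `x` and every `k ≥ 1`, `t^[k] x = x` implies `t x = x`. -/
def Aperiodic' {n : ℕ} (t : Fin n → Fin n) : Prop :=
  ∀ (x : Fin n) (k : ℕ), 1 ≤ k → t^[k] x = x → t x = x

/-- For every `n ≥ 2`, the semigroup `NM` of nearly monotonic transformations of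
`Fin n` is a maximal aperiodic subsemigroup: any composition-closed set of
aperiodic transformations containing `NM` equals `NM`. -/
theorem nearly_monotonic_maximal (n : ℕ) (hn : 2 ≤ n) :
    let T : Fin n := ⟨n - 1, by omega⟩
    let CM : Set (Fin n → Fin n) :=
      {t | t T = T ∧ ∀ i j : Fin n, i ≤ j → i < T → j < T →
        t i ≠ T → t j ≠ T → t i ≤ t j}
    let NM : Set (Fin n → Fin n) :=
      CM ∪ {t | ∃ c : Fin n, t = Function.const (Fin n) c}
    ∀ Tset : Set (Fin n → Fin n),
      (∀ a ∈ Tset, ∀ b ∈ Tset, b ∘ a ∈ Tset) →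
      (∀ t ∈ Tset, Aperiodic' t) →
      NM ⊆ Tset → Tset = NM := by
  intro T CM NM Tset hcomp haper hNM
  have le_top : ∀ x : Fin n, x ≤ T := by
    intro x
    have hx := x.isLt
    show x.val ≤ n - 1
    omega
  -- Key lemma: a decreasing pair yields a 2-cycle, contradiction with aperiodicity.
  have keyL : ∀ s ∈ Tset, ∀ x y : Fin n, x < y → s y < s x → (s x = T → y = T) → False := by
    intro s hs x y hxy hba hTb
    set g : Fin n → Fin n := fun z => if z ≤ s y then x else if z = T then T else y with hgdef
    have hsyT : s y < T := lt_of_lt_of_le hba (le_top (s x))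
    have hnTa : ¬ (T ≤ s y) := not_le.mpr hsyT
    have hgT : g T = T := by simp [hgdef, hnTa]
    have hga : g (s y) = x := by simp [hgdef]
    have hgb : g (s x) = y := by
      by_cases hbT : s x = T
      · rw [hbT, hgT, hTb hbT]
      · have hnb : ¬ (s x ≤ s y) := not_le.mpr hba
        simp [hgdef, hnb, hbT]
    have hgmem : g ∈ Tset := by
      apply hNM
      left
      refine ⟨hgT, ?_⟩
      intro i j hij hiT hjT hgi hgj
      by_cases hia : i ≤ s y
      · by_cases hja : j ≤ s y
        · simp [hgdef, hia, hja]
        · have hjT' : j ≠ T := ne_of_lt hjT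
          simp only [hgdef, if_pos hia, if_neg hja, if_neg hjT']
          exact le_of_lt hxy
      · have hja : ¬ j ≤ s y := fun h => hia (le_trans hij h)
        have hiT' : i ≠ T := ne_of_lt hiT
        have hjT' : j ≠ T := ne_of_lt hjT
        simp [hgdef, hia, hja, hiT', hjT']
    have hsg : s ∘ g ∈ Tset := hcomp g hgmem s hs
    have e1 : (s ∘ g) (s y) = s x := by rw [Function.comp_apply, hga]
    have e2 : (s ∘ g) (s x) = s y := by rw [Function.comp_apply, hgb]
    have h2 : (s ∘ g)^[2] (s y) = s y := by
      show (s ∘ g) ((s ∘ g) (s y)) = s y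
      rw [e1, e2]
    have hfix := haper _ hsg (s y) 2 (by norm_num) h2
    rw [e1] at hfix
    exact absurd hfix (ne_of_gt hba)
  apply Set.Subset.antisymm _ hNM
  intro t ht
  by_contra htNM
  have htCM : ¬ (t T = T ∧ ∀ i j : Fin n, i ≤ j → i < T → j < T →
      t i ≠ T → t j ≠ T → t i ≤ t j) := fun h => htNM (Or.inl h)
  have htconst : ∀ c : Fin n, t ≠ Function.const (Fin n) c :=
    fun c h => htNM (Or.inr ⟨c, h⟩)
  by_cases hT : t T = T
  · have hmono : ¬ ∀ i j : Fin n, i ≤ j → i < T → j < T →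
        t i ≠ T → t j ≠ T → t i ≤ t j := fun h => htCM ⟨hT, h⟩
    push_neg at hmono
    obtain ⟨i, j, hij, hiT, hjT, hi, hj, hlt⟩ := hmono
    have hij' : i < j := by
      rcases lt_or_eq_of_le hij with h | h
      · exact h
      · exact absurd (h ▸ le_refl (t i)) (not_le.mpr hlt)
    exact keyL t ht i j hij' hlt (fun h => absurd h hi)
  · have hcT : t T < T := lt_of_le_of_ne (le_top _) hT
    have hd : ∃ d, t d ≠ t T := by
      by_contra h
      push_neg at h
      exact htconst (t T) (funext h)
    obtain ⟨d, hd⟩ := hd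
    have hdT : d < T := lt_of_le_of_ne (le_top d) (fun h => hd (by rw [h]))
    rcases lt_or_gt_of_ne hd with he | he
    · -- t d < t T; this forces n ≥ 3
      have hval1 : (t d).val < (t T).val := he
      have hval2 : (t T).val < n - 1 := hcT
      have h3 : 1 < n - 1 := by omega
      set p : Fin n := ⟨0, by omega⟩ with hp
      set q : Fin n := ⟨1, by omega⟩ with hq
      have hpq : p < q := by show (0:ℕ) < 1; norm_num
      have hqT : q ≠ T := by
        intro h
        have : (1:ℕ) = n - 1 := congrArg Fin.val h
        omega
      set g : Fin n → Fin n := fun z => if z = q then d else T with hgdef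
      have hgT : g T = T := by
        have : T ≠ q := fun h => hqT h.symm
        simp [hgdef, this]
      have hgmem : g ∈ Tset := by
        apply hNM
        left
        refine ⟨hgT, ?_⟩
        intro i j hij hiT hjT hgi hgj
        by_cases hiq : i = q
        · by_cases hjq : j = q
          · simp [hgdef, hiq, hjq]
          · exact absurd (if_neg hjq) hgj
        · exact absurd (if_neg hiq) hgi
      have htg : t ∘ g ∈ Tset := hcomp g hgmem t ht
      have hpne : p ≠ q := ne_of_lt hpq
      have e1 : (t ∘ g) p = t T := by
        show t (g p) = t T
        rw [hgdef]
        simp [hpne]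
      have e2 : (t ∘ g) q = t d := by
        show t (g q) = t d
        rw [hgdef]
        simp
      apply keyL (t ∘ g) htg p q hpq
      · rw [e1, e2]; exact he
      · intro h
        rw [e1] at h
        exact absurd h hT
    · exact keyL t ht d T hdT he (fun _ => rfl)
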